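/- Let X be a Banach space that is an L₁-predual space, and let Y ⊆ X be a closed subspace that is an ideal in X. Then Y is also an L₁-predual space. -/

import Mathlib

/-- A Banach space `X` is an `L₁`-predual space if for every `ε > 0`, every finite-dimensional
normed space `F`, every subspace `E ⊆ F` and every linear isometric embedding `T : E → X`,
there is a linear extension `S : F → X` with `‖Sx‖ ≤ (1+ε)‖x‖` on `F`. -/
def IsL1Predual (X : Type*) [NormedAddCommGroup X] [NormedSpace ℝ X] : Prop :=
  ∀ (F : Type) (_ : NormedAddCommGroup F) (_ : NormedSpace ℝ F) (_ : FiniteDimensional ℝ F)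
    (E : Submodule ℝ F) (T : E →L[ℝ] X), (∀ x : E, ‖T x‖ = ‖x‖) →
    ∀ ε : ℝ, 0 < ε → ∃ S : F →L[ℝ] X, (∀ x : E, S x = T x) ∧
      ∀ x : F, ‖S x‖ ≤ (1 + ε) * ‖x‖

/-- Ideal in a Banach space. -/
def BanachIdeal {X : Type*} [NormedAddCommGroup X] [NormedSpace ℝ X] (Y : Submodule ℝ X) : Prop :=
  ∀ E : Submodule ℝ X, FiniteDimensional ℝ E → ∀ ε : ℝ, 0 < ε →
    ∃ T : E →L[ℝ] X, (∀ x : E, T x ∈ Y) ∧ (∀ x : E, (x : X) ∈ Y → T x = x) ∧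
      ∀ x : E, ‖T x‖ ≤ (1 + ε) * ‖x‖

/- Extend the isometry `E → Y ⊆ X` to an almost isometric `S : F → X`, then compose with an almost
contractive map from the finite-dimensional range of `S` into `Y` that fixes the points already in
`Y`; the two factors `1 + δ` multiply to at most `1 + ε`. -/

theorem BanachIdeal.exists_comp_retraction {X F : Type*} [NormedAddCommGroup X]
    [NormedSpace ℝ X] [NormedAddCommGroup F] [NormedSpace ℝ F] [FiniteDimensional ℝ F]
    {Y : Submodule ℝ X} (hY : BanachIdeal Y) (S : F →L[ℝ] X) {δ : ℝ} (hδ : 0 < δ) :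
    ∃ R : F →L[ℝ] Y, (∀ x, S x ∈ Y → (R x : X) = S x) ∧ ∀ x, ‖R x‖ ≤ (1 + δ) * ‖S x‖ := by
  obtain ⟨P, hPY, hPfix, hPnorm⟩ := hY S.range inferInstance δ hδ
  exact ⟨(P.comp S.rangeRestrict).codRestrict Y fun x => hPY _, fun x hx => hPfix _ hx,
    fun x => hPnorm _⟩

theorem exists_pos_mul_self_le {ε : ℝ} (hε : 0 < ε) : ∃ δ > 0, (1 + δ) * (1 + δ) ≤ 1 + ε := by
  refine ⟨√(1 + ε) - 1, ?_, ?_⟩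
  · rw [gt_iff_lt, sub_pos, Real.lt_sqrt zero_le_one]
    linarith
  · rw [add_sub_cancel, Real.mul_self_sqrt (by linarith)]

theorem ideal_isL1Predual_general {X : Type*} [NormedAddCommGroup X] [NormedSpace ℝ X]
    (hX : IsL1Predual X) (Y : Submodule ℝ X)
    (hY : BanachIdeal Y) : IsL1Predual ↥Y := by
  intro F iF iS iFin E T hT ε hε
  obtain ⟨δ, hδ, hδε⟩ := exists_pos_mul_self_le hε
  obtain ⟨S, hSext, hSnorm⟩ :=
    hX F iF iS iFin E (Y.subtypeL.comp T) (fun x => by simpa using hT x) δ hδ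
  obtain ⟨R, hRfix, hRnorm⟩ := hY.exists_comp_retraction S hδ
  refine ⟨R, fun x => Subtype.ext ?_, fun x => ?_⟩
  · have hSx : S x = T x := hSext x
    rw [hRfix x (hSx ▸ (T x).2), hSx]
  · calc ‖R x‖ ≤ (1 + δ) * ‖S x‖ := hRnorm x
      _ ≤ (1 + δ) * ((1 + δ) * ‖x‖) := by gcongr; exact hSnorm x
      _ ≤ (1 + ε) * ‖x‖ := by rw [← mul_assoc]; gcongr

/-- An ideal in an `L₁`-predual space is an `L₁`-predual space. -/
theorem ideal_isL1Predual {X : Type*} [NormedAddCommGroup X] [NormedSpace ℝ X]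
    [CompleteSpace X] (hX : IsL1Predual X) (Y : Submodule ℝ X) (hYc : IsClosed (Y : Set X))
    (hY : BanachIdeal Y) : IsL1Predual ↥Y :=
  ideal_isL1Predual_general hX Y hY
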